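/- arXiv:2005.06733 — 3 statements merged into one kernel-verified Lean document; each statement's English description precedes it below -/
import Mathlib

section
/- For every nonzero x ∈ ℝ³ (Rodrigues' formula), exp(hat(x)) = 1 + (sin ‖x‖ / ‖x‖) • hat(x) + ((1 − cos ‖x‖) / ‖x‖²) • hat(x)², where exp is the matrix exponential and ‖x‖ is the Euclidean norm. -/
open Matrix Real

/-- The hat map sending `x ∈ ℝ³` to the skew-symmetric matrix with `hat x *ᵥ y = x ×₃ y`. -/
def hat (x : Fin 3 → ℝ) : Matrix (Fin 3) (Fin 3) ℝ :=
  !![0, -x 2, x 1; x 2, 0, -x 0; -x 1, x 0, 0]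

/-- The Euclidean norm on ℝ³. -/
noncomputable def enorm3 (x : Fin 3 → ℝ) : ℝ := Real.sqrt (∑ i, x i ^ 2)

/-!
`A = hat x` satisfies `A ^ 3 = -θ ^ 2 • A` with `θ = ‖x‖`, so `A ^ (2n+1) = (-θ²)ⁿ • A` and
`A ^ (2n+2) = (-θ²)ⁿ • A ^ 2`. Splitting the exponential series into odd and even terms, the odd
terms sum to `(sin θ / θ) • A` by the sine series, and the even terms of positive degree sum to
`((1 - cos θ) / θ ^ 2) • A ^ 2` by the cosine series with its constant term removed.
-/

open NormedSpace Nat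

section PowThree

variable {R 𝔸 : Type*} [CommSemiring R] [Semiring 𝔸] [Algebra R 𝔸] {A : 𝔸} {c : R}

theorem pow_two_mul_add_one_of_pow_three_eq_smul (h : A ^ 3 = c • A) (n : ℕ) :
    A ^ (2 * n + 1) = c ^ n • A := by
  induction n with
  | zero => simp
  | succ n ih =>
    rw [show 2 * (n + 1) + 1 = 2 + (2 * n + 1) by ring, pow_add, ih, mul_smul_comm, ← pow_succ,
      h, smul_smul, pow_succ]

theorem pow_two_mul_add_two_of_pow_three_eq_smul (h : A ^ 3 = c • A) (n : ℕ) :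
    A ^ (2 * n + 2) = c ^ n • A ^ 2 := by
  rw [pow_succ, pow_two_mul_add_one_of_pow_three_eq_smul h, smul_mul_assoc, ← sq]

end PowThree

section ExpSeries

variable {𝔸 : Type*} [Ring 𝔸] [Algebra ℝ 𝔸] [TopologicalSpace 𝔸] [ContinuousSMul ℝ 𝔸]
  {A : 𝔸} {θ : ℝ}

theorem hasSum_exp_terms_odd_of_pow_three_eq (hθ : θ ≠ 0) (h : A ^ 3 = -θ ^ 2 • A) :
    HasSum (fun n => ((2 * n + 1)! : ℝ)⁻¹ • A ^ (2 * n + 1)) ((sin θ / θ) • A) := by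
  convert ((hasSum_sin θ).div_const θ).smul_const A using 2 with n
  rw [pow_two_mul_add_one_of_pow_three_eq_smul h, smul_smul, neg_pow, ← pow_mul]
  congr 1
  field_simp
  ring

theorem hasSum_exp_terms_even_of_pow_three_eq [IsTopologicalAddGroup 𝔸] (hθ : θ ≠ 0)
    (h : A ^ 3 = -θ ^ 2 • A) :
    HasSum (fun n => ((2 * n)! : ℝ)⁻¹ • A ^ (2 * n)) (1 + ((1 - cos θ) / θ ^ 2) • A ^ 2) := by
  have hcos : HasSum (fun n => (-1) ^ (n + 1) * θ ^ (2 * (n + 1)) / (2 * (n + 1))!)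
      (cos θ - 1) := by
    simpa using (hasSum_nat_add_iff' 1).mpr (hasSum_cos θ)
  rw [← hasSum_nat_add_iff' 1]
  convert! (hcos.div_const (-θ ^ 2)).smul_const (A ^ 2) using 1
  · ext n
    rw [mul_add_one, pow_two_mul_add_two_of_pow_three_eq_smul h, smul_smul, neg_pow, ← pow_mul]
    congr 1
    field_simp
    ring
  · simp only [Finset.range_one, Finset.sum_singleton, mul_zero, pow_zero, factorial_zero,
      cast_one, inv_one, one_smul, add_sub_cancel_left]
    congr 1
    field_simp
    ring

theorem exp_of_pow_three_eq [IsTopologicalRing 𝔸] [T2Space 𝔸] (hθ : θ ≠ 0)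
    (h : A ^ 3 = -θ ^ 2 • A) :
    exp A = 1 + (sin θ / θ) • A + ((1 - cos θ) / θ ^ 2) • A ^ 2 := by
  have hsum := (hasSum_exp_terms_even_of_pow_three_eq hθ h).even_add_odd
    (f := fun n => (n ! : ℝ)⁻¹ • A ^ n) (hasSum_exp_terms_odd_of_pow_three_eq hθ h)
  rw [congrFun (exp_eq_tsum ℝ) A, hsum.tsum_eq]
  abel

end ExpSeries

theorem enorm3_sq (x : Fin 3 → ℝ) : enorm3 x ^ 2 = x 0 ^ 2 + x 1 ^ 2 + x 2 ^ 2 := by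
  rw [enorm3, sq_sqrt (by positivity), Fin.sum_univ_three]

theorem enorm3_ne_zero {x : Fin 3 → ℝ} (hx : x ≠ 0) : enorm3 x ≠ 0 := by
  have h := EuclideanSpace.norm_eq (WithLp.toLp 2 x)
  simp only [Real.norm_eq_abs, sq_abs] at h
  rw [enorm3, ← h]
  simpa using hx

theorem hat_pow_three (x : Fin 3 → ℝ) : hat x ^ 3 = -enorm3 x ^ 2 • hat x := by
  rw [enorm3_sq, pow_three, hat, mul_fin_three, mul_fin_three]
  ext i j
  fin_cases i <;> fin_cases j <;> simp <;> ring

/-- Rodrigues' formula: the matrix exponential of `hat x` for nonzero `x ∈ ℝ³`. -/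
theorem rodrigues_formula (x : Fin 3 → ℝ) (hx : x ≠ 0) :
    NormedSpace.exp (hat x) =
      1 + (Real.sin (enorm3 x) / enorm3 x) • hat x +
        ((1 - Real.cos (enorm3 x)) / (enorm3 x) ^ 2) • (hat x) ^ 2 :=
  exp_of_pow_three_eq (enorm3_ne_zero hx) (hat_pow_three x)
end

section
/- Let R, R_d be real 3×3 matrices with RᵀR = 1, R_dᵀR_d = 1, det R = 1 and det R_d = 1. Then −1 ≤ tr(R_dᵀ · R) ≤ 3, so that ψ(R, R_d) = 2 − √(1 + tr(R_dᵀ · R)) is well defined and satisfies 0 ≤ ψ(R, R_d) ≤ 2; moreover ψ(R, R_d) = 0 if and only if R = R_d. -/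
/-!
For orthogonal `Q = R_dᵀ R` the Frobenius norm gives `‖Q - 1‖² = 2 (3 - tr Q)`, so `tr Q ≤ 3` with
equality exactly when `Q = 1`. If moreover `det Q = 1`, then `adj Q = Qᵀ`, so the 3×3 identity
`tr (Q²) = (tr Q)² - 2 tr (adj Q)` yields `‖Q - Qᵀ‖² = 2 (3 - tr Q) (1 + tr Q)`, whence `-1 ≤ tr Q`.
-/

open Matrix

namespace Matrix

variable {m n : Type*} [Fintype m] [Fintype n]

theorem adjugate_eq_transpose_of_transpose_mul_self_eq_one [DecidableEq n] {R : Type*}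
    [CommRing R] {Q : Matrix n n R} (hQ : Qᵀ * Q = 1) (hdet : Q.det = 1) : Q.adjugate = Qᵀ :=
  calc Q.adjugate = Qᵀ * Q * Q.adjugate := by rw [hQ, Matrix.one_mul]
    _ = Qᵀ := by rw [Matrix.mul_assoc, mul_adjugate, hdet, one_smul, Matrix.mul_one]

theorem trace_mul_self_fin_three {R : Type*} [CommRing R] (A : Matrix (Fin 3) (Fin 3) R) :
    (A * A).trace = A.trace ^ 2 - 2 * A.adjugate.trace := by
  simp only [trace_fin_three, mul_apply, Fin.sum_univ_three, adjugate_fin_three, of_apply,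
    cons_val', cons_val_zero, cons_val_fin_one, cons_val_one, cons_val]
  ring

theorem trace_transpose_mul_self_nonneg (A : Matrix m n ℝ) : 0 ≤ (Aᵀ * A).trace := by
  simpa using (posSemidef_conjTranspose_mul_self A).trace_nonneg

theorem trace_transpose_mul_self_eq_zero_iff {A : Matrix m n ℝ} : (Aᵀ * A).trace = 0 ↔ A = 0 := by
  simpa using trace_conjTranspose_mul_self_eq_zero_iff (A := A)

section Orthogonal

variable [DecidableEq n] {Q : Matrix n n ℝ}

theorem trace_transpose_mul_self_sub_one (hQ : Qᵀ * Q = 1) :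
    ((Q - 1)ᵀ * (Q - 1)).trace = 2 * (Fintype.card n - Q.trace) := by
  simp only [transpose_sub, transpose_one, sub_mul, mul_sub, hQ, Matrix.mul_one, Matrix.one_mul,
    trace_sub, trace_transpose, trace_one]
  ring

theorem trace_le_card_of_transpose_mul_self_eq_one (hQ : Qᵀ * Q = 1) :
    Q.trace ≤ Fintype.card n := by
  have := trace_transpose_mul_self_nonneg (Q - 1)
  rw [trace_transpose_mul_self_sub_one hQ] at this
  linarith

theorem trace_eq_card_iff_of_transpose_mul_self_eq_one (hQ : Qᵀ * Q = 1) :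
    Q.trace = Fintype.card n ↔ Q = 1 := by
  rw [← sub_eq_zero (a := Q), ← trace_transpose_mul_self_eq_zero_iff,
    trace_transpose_mul_self_sub_one hQ]
  constructor <;> intro h <;> linarith

end Orthogonal

variable {Q : Matrix (Fin 3) (Fin 3) ℝ}

theorem trace_transpose_mul_self_sub_transpose_fin_three (hQ : Qᵀ * Q = 1) (hdet : Q.det = 1) :
    ((Q - Qᵀ)ᵀ * (Q - Qᵀ)).trace = 2 * (3 - Q.trace) * (1 + Q.trace) := by
  have hQ' : Q * Qᵀ = 1 := mul_eq_one_comm.mp hQ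
  have hsq : (Q * Q).trace = Q.trace ^ 2 - 2 * Q.trace := by
    rw [trace_mul_self_fin_three, adjugate_eq_transpose_of_transpose_mul_self_eq_one hQ hdet,
      trace_transpose]
  simp only [transpose_sub, transpose_transpose, sub_mul, mul_sub, hQ, hQ', trace_sub, trace_one,
    ← transpose_mul, trace_transpose, hsq, Fintype.card_fin]
  ring

theorem neg_one_le_trace_of_transpose_mul_self_eq_one_of_det_eq_one (hQ : Qᵀ * Q = 1)
    (hdet : Q.det = 1) : -1 ≤ Q.trace := by
  have hnonneg := trace_transpose_mul_self_nonneg (Q - Qᵀ)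
  have hle : Q.trace ≤ 3 := by simpa using trace_le_card_of_transpose_mul_self_eq_one hQ
  rw [trace_transpose_mul_self_sub_transpose_fin_three hQ hdet] at hnonneg
  nlinarith

end Matrix

/-- For rotation matrices `R, R_d ∈ SO(3)`, `-1 ≤ tr (R_dᵀ R) ≤ 3`, the attitude error
function `ψ(R, R_d) = 2 - √(1 + tr (R_dᵀ R))` satisfies `0 ≤ ψ ≤ 2`, and `ψ = 0 ↔ R = R_d`. -/
theorem attitude_error_function_bounds (R R_d : Matrix (Fin 3) (Fin 3) ℝ)
    (hR : Rᵀ * R = 1) (hRd : R_dᵀ * R_d = 1) (hdetR : R.det = 1) (hdetRd : R_d.det = 1) :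
    (-1 ≤ (R_dᵀ * R).trace ∧ (R_dᵀ * R).trace ≤ 3) ∧
      (0 ≤ 2 - Real.sqrt (1 + (R_dᵀ * R).trace) ∧
        2 - Real.sqrt (1 + (R_dᵀ * R).trace) ≤ 2) ∧
      (2 - Real.sqrt (1 + (R_dᵀ * R).trace) = 0 ↔ R = R_d) := by
  have hQ : (R_dᵀ * R)ᵀ * (R_dᵀ * R) = 1 := by
    rw [transpose_mul, transpose_transpose, Matrix.mul_assoc, ← Matrix.mul_assoc R_d,
      mul_eq_one_comm.mp hRd, Matrix.one_mul, hR]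
  have hdet : (R_dᵀ * R).det = 1 := by rw [det_mul, det_transpose, hdetR, hdetRd, one_mul]
  have hle : (R_dᵀ * R).trace ≤ 3 := by
    simpa using trace_le_card_of_transpose_mul_self_eq_one hQ
  have hge := neg_one_le_trace_of_transpose_mul_self_eq_one_of_det_eq_one hQ hdet
  have hsqrt : Real.sqrt (1 + (R_dᵀ * R).trace) ≤ 2 :=
    Real.sqrt_le_iff.mpr ⟨zero_le_two, by linarith⟩
  refine ⟨⟨hge, hle⟩, ⟨by linarith, by linarith [Real.sqrt_nonneg (1 + (R_dᵀ * R).trace)]⟩, ?_⟩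
  calc 2 - Real.sqrt (1 + (R_dᵀ * R).trace) = 0
      ↔ (R_dᵀ * R).trace = 3 := by
        rw [sub_eq_zero, eq_comm, Real.sqrt_eq_iff_eq_sq (by linarith) zero_le_two]
        constructor <;> intro h <;> linarith
    _ ↔ R_dᵀ * R = 1 := by simpa using trace_eq_card_iff_of_transpose_mul_self_eq_one hQ
    _ ↔ R = R_d :=
        ⟨fun h => (inv_eq_right_inv h).symm.trans (inv_eq_right_inv hRd), fun h => h ▸ hRd⟩
end

section
/- Let R, R_d : ℝ → Matrix (Fin 3) (Fin 3) ℝ be differentiable curves taking values in SO(3), and Ω, Ω_d : ℝ → ℝ³ be continuous with R'(t) = R(t) · hat(Ω(t)) and R_d'(t) = R_d(t) · hat(Ω_d(t)) for all t. Suppose tr(R_d(t)ᵀ · R(t)) > −1 for all t. Then the function t ↦ ψ(t) = 2 − √(1 + tr(R_d(t)ᵀ · R(t))) is differentiable with ψ'(t) = ⟨e_R(t), e_Ω(t)⟩, where e_R(t) = (1/(2√(1 + tr(R_d(t)ᵀR(t))))) • vee(R_d(t)ᵀR(t) − R(t)ᵀR_d(t)) and e_Ω(t) = Ω(t) − R(t)ᵀ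 · R_d(t) · Ω_d(t). -/
open Matrix

/-- The vee map, inverse to `hat` on skew-symmetric matrices. -/
def vee (S : Matrix (Fin 3) (Fin 3) ℝ) : Fin 3 → ℝ :=
  ![S 2 1, S 0 2, S 1 0]

/-- The rotation error vector. -/
noncomputable def eR (R Rd : ℝ → Matrix (Fin 3) (Fin 3) ℝ) (t : ℝ) : Fin 3 → ℝ :=
  (1 / (2 * Real.sqrt (1 + ((Rd t)ᵀ * R t).trace))) •
    vee ((Rd t)ᵀ * R t - (R t)ᵀ * Rd t)

/-- The angular velocity error vector. -/
def eΩ (R Rd : ℝ → Matrix (Fin 3) (Fin 3) ℝ) (Ω Ωd : ℝ → Fin 3 → ℝ) (t : ℝ) : Fin 3 → ℝ :=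
  Ω t - ((R t)ᵀ * Rd t) *ᵥ Ωd t

/-! Write `Q = R_dᵀ R ∈ SO(3)` and `a = vee (Q - Qᵀ)`. Since `tr (M hat x) = -⟨vee (M - Mᵀ), x⟩`,
the kinematic equations give `(tr Q)' = ⟨a, Ω_d⟩ - ⟨a, Ω⟩`. A rotation fixes its own axis,
`Q a = a`, because `hat (Q v) = Q hat v Qᵀ` on `SO(3)`; so
`⟨a, Qᵀ Ω_d⟩ = ⟨a, Ω_d⟩`, and the chain rule for `√` finishes the computation. -/

lemma vee_hat (x : Fin 3 → ℝ) : vee (hat x) = x := by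
  funext i; fin_cases i <;> rfl

lemma hat_injective : Function.Injective hat :=
  Function.LeftInverse.injective vee_hat

lemma hat_vee_sub_transpose (M : Matrix (Fin 3) (Fin 3) ℝ) : hat (vee (M - Mᵀ)) = M - Mᵀ := by
  ext i j
  fin_cases i <;> fin_cases j <;> simp [hat, vee]

lemma hat_transpose (x : Fin 3 → ℝ) : (hat x)ᵀ = -hat x := by
  ext i j
  fin_cases i <;> fin_cases j <;> simp [hat]

lemma trace_mul_hat (M : Matrix (Fin 3) (Fin 3) ℝ) (x : Fin 3 → ℝ) :
    (M * hat x).trace = -(vee (M - Mᵀ) ⬝ᵥ x) := by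
  simp [Matrix.trace, Matrix.mul_apply, hat, vee, dotProduct, Fin.sum_univ_three]
  ring

lemma transpose_mul_hat_mulVec_mul (M : Matrix (Fin 3) (Fin 3) ℝ) (v : Fin 3 → ℝ) :
    Mᵀ * hat (M *ᵥ v) * M = M.det • hat v := by
  ext i j
  fin_cases i <;> fin_cases j <;>
    simp [Matrix.mul_apply, Matrix.mulVec, Matrix.det_fin_three, hat, dotProduct,
      Fin.sum_univ_three] <;> ring

lemma hat_mulVec_of_orthogonal {Q : Matrix (Fin 3) (Fin 3) ℝ} (hQ : Qᵀ * Q = 1)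
    (hdet : Q.det = 1) (v : Fin 3 → ℝ) : hat (Q *ᵥ v) = Q * hat v * Qᵀ := by
  have hQ' : Q * Qᵀ = 1 := mul_eq_one_comm.mp hQ
  calc hat (Q *ᵥ v) = (Q * Qᵀ) * hat (Q *ᵥ v) * (Q * Qᵀ) := by
        rw [hQ', Matrix.one_mul, Matrix.mul_one]
    _ = Q * (Qᵀ * hat (Q *ᵥ v) * Q) * Qᵀ := by simp only [Matrix.mul_assoc]
    _ = Q * hat v * Qᵀ := by rw [transpose_mul_hat_mulVec_mul, hdet, one_smul]

lemma mulVec_vee_sub_transpose_self {Q : Matrix (Fin 3) (Fin 3) ℝ} (hQ : Qᵀ * Q = 1)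
    (hdet : Q.det = 1) : Q *ᵥ vee (Q - Qᵀ) = vee (Q - Qᵀ) := by
  have hQ' : Q * Qᵀ = 1 := mul_eq_one_comm.mp hQ
  apply hat_injective
  rw [hat_mulVec_of_orthogonal hQ hdet, hat_vee_sub_transpose, Matrix.mul_sub, Matrix.sub_mul,
    Matrix.mul_assoc, hQ', Matrix.mul_one, Matrix.one_mul]

lemma hasDerivAt_trace_transpose_mul {n : Type*} [Fintype n] {A B : ℝ → Matrix n n ℝ}
    {A' B' : Matrix n n ℝ} {t : ℝ} (hA : ∀ i j, HasDerivAt (fun s => A s i j) (A' i j) t)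
    (hB : ∀ i j, HasDerivAt (fun s => B s i j) (B' i j) t) :
    HasDerivAt (fun s => ((A s)ᵀ * B s).trace) ((A'ᵀ * B t + (A t)ᵀ * B').trace) t := by
  have hsum : ∀ (C D : Matrix n n ℝ), (Cᵀ * D).trace = ∑ i, ∑ j, C j i * D j i := by
    intro C D
    simp [Matrix.trace, Matrix.mul_apply]
  simp only [hsum, Matrix.trace_add, ← Finset.sum_add_distrib]
  exact HasDerivAt.fun_sum fun i _ => HasDerivAt.fun_sum fun j _ => (hA j i).mul (hB j i)

lemma trace_hat_transpose_mul_add_mul_hat (Q : Matrix (Fin 3) (Fin 3) ℝ) (x y : Fin 3 → ℝ) :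
    ((hat y)ᵀ * Q + Q * hat x).trace = vee (Q - Qᵀ) ⬝ᵥ y - vee (Q - Qᵀ) ⬝ᵥ x := by
  rw [Matrix.trace_add, hat_transpose, Matrix.neg_mul, Matrix.trace_neg, Matrix.trace_mul_comm,
    trace_mul_hat, trace_mul_hat]
  ring

lemma hasDerivAt_trace_transpose_mul_of_kinematics {R Rd : ℝ → Matrix (Fin 3) (Fin 3) ℝ}
    {Ω Ωd : ℝ → Fin 3 → ℝ} {t : ℝ}
    (hR : ∀ i j, HasDerivAt (fun s => R s i j) ((R t * hat (Ω t)) i j) t)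
    (hRd : ∀ i j, HasDerivAt (fun s => Rd s i j) ((Rd t * hat (Ωd t)) i j) t) :
    HasDerivAt (fun s => ((Rd s)ᵀ * R s).trace)
      (vee ((Rd t)ᵀ * R t - ((Rd t)ᵀ * R t)ᵀ) ⬝ᵥ Ωd t -
        vee ((Rd t)ᵀ * R t - ((Rd t)ᵀ * R t)ᵀ) ⬝ᵥ Ω t) t := by
  convert hasDerivAt_trace_transpose_mul hRd hR using 1
  rw [← trace_hat_transpose_mul_add_mul_hat, Matrix.transpose_mul, Matrix.mul_assoc,
    Matrix.mul_assoc]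

theorem hasDerivAt_attitude_error_general
    (R Rd : ℝ → Matrix (Fin 3) (Fin 3) ℝ) (Ω Ωd : ℝ → Fin 3 → ℝ)
    (hSO : ∀ t, (R t)ᵀ * R t = 1 ∧ (R t).det = 1)
    (hSOd : ∀ t, (Rd t)ᵀ * Rd t = 1 ∧ (Rd t).det = 1)
    (hR : ∀ t i j, HasDerivAt (fun s => R s i j) ((R t * hat (Ω t)) i j) t)
    (hRd : ∀ t i j, HasDerivAt (fun s => Rd s i j) ((Rd t * hat (Ωd t)) i j) t)
    (htr : ∀ t, -1 < ((Rd t)ᵀ * R t).trace) (t : ℝ) :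
    HasDerivAt (fun s => 2 - Real.sqrt (1 + ((Rd s)ᵀ * R s).trace))
      (∑ i, eR R Rd t i * eΩ R Rd Ω Ωd t i) t := by
  set Q := (Rd t)ᵀ * R t with hQ_def
  have hQ : Qᵀ * Q = 1 := by
    rw [Matrix.transpose_mul, Matrix.transpose_transpose, Matrix.mul_assoc,
      ← Matrix.mul_assoc (Rd t), mul_eq_one_comm.mp (hSOd t).1, Matrix.one_mul, (hSO t).1]
  have hdet : Q.det = 1 := by
    rw [Matrix.det_mul, Matrix.det_transpose, (hSO t).2, (hSOd t).2, one_mul]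
  have haxis : vee (Q - Qᵀ) ⬝ᵥ (Qᵀ *ᵥ Ωd t) = vee (Q - Qᵀ) ⬝ᵥ Ωd t := by
    rw [Matrix.dotProduct_mulVec, Matrix.vecMul_transpose, mulVec_vee_sub_transpose_self hQ hdet]
  have hψ := (hasDerivAt_const t (2 : ℝ)).sub
    (((hasDerivAt_trace_transpose_mul_of_kinematics (hR t) (hRd t)).const_add 1).sqrt
      (by linarith [htr t]))
  have hsqrt : Real.sqrt (1 + Q.trace) ≠ 0 := (Real.sqrt_pos.mpr (by linarith [htr t])).ne'
  have hQt : (R t)ᵀ * Rd t = Qᵀ := by rw [Matrix.transpose_mul, Matrix.transpose_transpose]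
  refine hψ.congr_deriv (Eq.symm ?_)
  change eR R Rd t ⬝ᵥ eΩ R Rd Ω Ωd t = _
  rw [eR, eΩ, ← hQ_def, hQt, smul_dotProduct, dotProduct_sub, haxis, smul_eq_mul]
  field_simp
  ring

/-- The attitude error function `ψ(t) = 2 - √(1 + tr (R_d(t)ᵀ R(t)))` is differentiable
with derivative `⟨e_R(t), e_Ω(t)⟩`. -/
theorem hasDerivAt_attitude_error
    (R Rd : ℝ → Matrix (Fin 3) (Fin 3) ℝ) (Ω Ωd : ℝ → Fin 3 → ℝ)
    (hSO : ∀ t, (R t)ᵀ * R t = 1 ∧ (R t).det = 1)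
    (hSOd : ∀ t, (Rd t)ᵀ * Rd t = 1 ∧ (Rd t).det = 1)
    (hΩcont : Continuous Ω) (hΩdcont : Continuous Ωd)
    (hR : ∀ t i j, HasDerivAt (fun s => R s i j) ((R t * hat (Ω t)) i j) t)
    (hRd : ∀ t i j, HasDerivAt (fun s => Rd s i j) ((Rd t * hat (Ωd t)) i j) t)
    (htr : ∀ t, -1 < ((Rd t)ᵀ * R t).trace) (t : ℝ) :
    HasDerivAt (fun s => 2 - Real.sqrt (1 + ((Rd s)ᵀ * R s).trace))
      (∑ i, eR R Rd t i * eΩ R Rd Ω Ωd t i) t :=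
  hasDerivAt_attitude_error_general R Rd Ω Ωd hSO hSOd hR hRd htr t
end
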